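/- For n ≥ 4, 3 ≤ r ≤ n−1, r̂ = min{r, ⌈(n+1)/2⌉}, and 3 ≤ m ≤ n−r̂+1: if α ∈ L_{m,r̂}, then L_{m,r̂} ⊆ ⟨OPD(n,r) ∪ {α}⟩; moreover ORD(n,r) \ L_{m,r̂} is a maximal subsemigroup of ORD(n,r). -/
import Mathlib


open Finset

namespace ORDPaper

/-- `f` is a full transformation of the chain `{1,…,n}`, acting as the identity outside. -/
def IsTrans (n : ℕ) (f : ℕ → ℕ) : Prop :=
  (∀ x, 1 ≤ x → x ≤ n → 1 ≤ f x ∧ f x ≤ n) ∧ ∀ x, ¬(1 ≤ x ∧ x ≤ n) → f x = x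

/-- Composition of transformations, written left to right: `x(αβ) = (xα)β`. -/
def comp (f g : ℕ → ℕ) : ℕ → ℕ := fun x => g (f x)

/-- The value of `f` at the cyclic successor of `i` (so `(n+1)α = 1α`). -/
def nxt (n : ℕ) (f : ℕ → ℕ) (i : ℕ) : ℕ := if i = n then f 1 else f (i + 1)

/-- `(1α,…,nα)` is cyclic: there is at most one descent (cyclically). -/
def Cyclic (n : ℕ) (f : ℕ → ℕ) : Prop :=
  ((Finset.Icc 1 n).filter (fun i => nxt n f i < f i)).card ≤ 1

/-- `(1α,…,nα)` is anti-cyclic: there is at most one ascent (cyclically). -/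
def AntiCyclic (n : ℕ) (f : ℕ → ℕ) : Prop :=
  ((Finset.Icc 1 n).filter (fun i => f i < nxt n f i)).card ≤ 1

/-- Order-decreasing on `{1,…,n}`. -/
def Decreasing (n : ℕ) (f : ℕ → ℕ) : Prop := ∀ x, 1 ≤ x → x ≤ n → f x ≤ x

/-- Image of `{1,…,n}` under `f`. -/
def im (n : ℕ) (f : ℕ → ℕ) : Finset ℕ := (Finset.Icc 1 n).image f

/-- Fixed points of `f` in `{1,…,n}`. -/
def fixSet (n : ℕ) (f : ℕ → ℕ) : Finset ℕ := (Finset.Icc 1 n).filter (fun x => f x = x)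

/-- The semigroup `D_n` of order-decreasing full transformations. -/
def Dn (n : ℕ) : Set (ℕ → ℕ) := {f | IsTrans n f ∧ Decreasing n f}

/-- Orientation-preserving order-decreasing transformations. -/
def OPD (n : ℕ) : Set (ℕ → ℕ) := {f | f ∈ Dn n ∧ Cyclic n f}

/-- Oriented order-decreasing transformations. -/
def ORDn (n : ℕ) : Set (ℕ → ℕ) := {f | f ∈ Dn n ∧ (Cyclic n f ∨ AntiCyclic n f)}

/-- `RD*_n`: orientation-reversing, order-decreasing, not orientation-preserving. -/
def RDstar (n : ℕ) : Set (ℕ → ℕ) := {f | f ∈ Dn n ∧ AntiCyclic n f ∧ ¬ Cyclic n f}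

/-- `ORD(n,r)`. -/
def ORDr (n r : ℕ) : Set (ℕ → ℕ) := {f | f ∈ ORDn n ∧ (im n f).card ≤ r}

/-- `OPD(n,r)`. -/
def OPDr (n r : ℕ) : Set (ℕ → ℕ) := {f | f ∈ OPD n ∧ (im n f).card ≤ r}

/-- The order-reversing degree: `min(X_n \ 1α⁻¹)`. -/
noncomputable def ordDeg (n : ℕ) (f : ℕ → ℕ) : ℕ := sInf {x | 1 ≤ x ∧ x ≤ n ∧ f x ≠ 1}

/-- Minimum of the preimage of `x` under `f` inside `{1,…,n}`. -/
noncomputable def preMin (n : ℕ) (f : ℕ → ℕ) (x : ℕ) : ℕ := sInf {y | 1 ≤ y ∧ y ≤ n ∧ f y = x}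

/-- Membership in the subsemigroup generated by `A`. -/
inductive gen (A : Set (ℕ → ℕ)) : (ℕ → ℕ) → Prop
  | base {f} : f ∈ A → gen A f
  | mul {f g} : gen A f → gen A g → gen A (comp f g)

/-- Rank of a transformation semigroup `S`. -/
noncomputable def rank (S : Set (ℕ → ℕ)) : ℕ :=
  sInf {k | ∃ A : Set (ℕ → ℕ), A ⊆ S ∧ A.Finite ∧ A.ncard = k ∧ {f | gen A f} = S}

/-- `r̂ = min{r, ⌈(n+1)/2⌉}`. -/
def rhat (n r : ℕ) : ℕ := min r ((n + 2) / 2)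

/-- `ρ_m` fixes `1,…,m` and sends `m+1,…,n` to `1`. -/
def rho (n m : ℕ) : ℕ → ℕ := fun x =>
  if ¬(1 ≤ x ∧ x ≤ n) then x else if x ≤ m then x else 1

/-- The order-preserving degree `opd(α) = max{m : α|_{X_m} is order-preserving}`. -/
noncomputable def opd (n : ℕ) (f : ℕ → ℕ) : ℕ :=
  sSup {m | m ≤ n ∧ ∀ x y, 1 ≤ x → x ≤ y → y ≤ m → f x ≤ f y}

/-- The set `C = (⋃_{m=r+1}^n B_m) ∪ {ρ_2,…,ρ_r}`. -/
def Cset (n r : ℕ) : Set (ℕ → ℕ) :=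
  {f | (f ∈ OPD n ∧ comp f f = f ∧ (im n f).card = r ∧ r + 1 ≤ opd n f ∧ opd n f ≤ n)
    ∨ (∃ m, 2 ≤ m ∧ m ≤ r ∧ f = rho n m)}

/-- The map `λ_{m,r}`: sends `[1,m-1]` to `1`, maps `x ∈ [m, min(2m-p-2,n)]` to `2m-x`
(where `p = max{0, m-r}` is `m - r` in truncated subtraction), and the rest of `[1,n]` to `1`. -/
def lam (n r m : ℕ) : ℕ → ℕ := fun x =>
  if ¬(1 ≤ x ∧ x ≤ n) then x
  else if x < m then 1
  else if x ≤ min (2 * m - (m - r) - 2) n then 2 * m - x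
  else 1

/-- `G_{n,r} = {λ_{m,r} : 3 ≤ m ≤ n-1}`. -/
def Gset (n r : ℕ) : Set (ℕ → ℕ) := {f | ∃ m, 3 ≤ m ∧ m ≤ n - 1 ∧ f = lam n r m}

/-- `L_{m,r}`. -/
def Lset (n r m : ℕ) : Set (ℕ → ℕ) :=
  {f | f ∈ ORDn n ∧ im n f = im n (lam n r m) ∧
    ∀ x ∈ im n (lam n r m), preMin n f x = preMin n (lam n r m) x}

/-- `α_{m,r}`: the idempotent fixing `{1} ∪ [m, 2m-p-2]` and sending the rest of `[1,n]` to `1`. -/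
def alphaMap (n r m : ℕ) : ℕ → ℕ := fun x =>
  if ¬(1 ≤ x ∧ x ≤ n) then x
  else if x < m then 1
  else if x ≤ 2 * m - (m - r) - 2 then x
  else 1

/-- `β_{m,r}`: sends `[1,m-1]` to `1`, maps `m,…,2m-p-3` order-reversingly to `m,…,p+3`,
and `[2m-p-2, n]` to `p+2`. -/
def betaMap (n r m : ℕ) : ℕ → ℕ := fun x =>
  if ¬(1 ≤ x ∧ x ≤ n) then x
  else if x < m then 1
  else if x ≤ 2 * m - (m - r) - 3 then 2 * m - x
  else (m - r) + 2

/-- `S` is a subsemigroup of `T`. -/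
def IsSubsemigroupOf (S T : Set (ℕ → ℕ)) : Prop :=
  S ⊆ T ∧ ∀ f ∈ S, ∀ g ∈ S, comp f g ∈ S

/-- `S` is a maximal subsemigroup of `T`. -/
def IsMaximalSubsemigroupOf (S T : Set (ℕ → ℕ)) : Prop :=
  IsSubsemigroupOf S T ∧ S ≠ T ∧ ∀ U, IsSubsemigroupOf U T → S ⊆ U → U = S ∨ U = T


/-! ### Auxiliary development -/

section Aux

/-- nondecreasing-then-one shape: characterizes cyclic order-decreasing maps. -/
def ShapeC (n : ℕ) (f : ℕ → ℕ) : Prop :=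
  ∃ d, 1 ≤ d ∧ d ≤ n ∧ (∀ x y, 1 ≤ x → x ≤ y → y ≤ d → f x ≤ f y) ∧
    ∀ x, d < x → x ≤ n → f x = 1

/-- ones-then-nonincreasing shape: characterizes anticyclic order-decreasing maps. -/
def ShapeA (n : ℕ) (f : ℕ → ℕ) : Prop :=
  ∃ a, 1 ≤ a ∧ a ≤ n ∧ (∀ x, 1 ≤ x → x ≤ a → f x = 1) ∧
    ∀ x y, a < x → x ≤ y → y ≤ n → f y ≤ f x

lemma dn_one {n : ℕ} {f : ℕ → ℕ} (hn : 1 ≤ n) (hf : f ∈ Dn n) : f 1 = 1 :=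
  le_antisymm (hf.2 1 le_rfl hn) (hf.1.1 1 le_rfl hn).1

lemma dn_lb {n : ℕ} {f : ℕ → ℕ} (hf : f ∈ Dn n) {x : ℕ} (h1 : 1 ≤ x) (h2 : x ≤ n) :
    1 ≤ f x := (hf.1.1 x h1 h2).1

lemma dn_ub {n : ℕ} {f : ℕ → ℕ} (hf : f ∈ Dn n) {x : ℕ} (h1 : 1 ≤ x) (h2 : x ≤ n) :
    f x ≤ n := (hf.1.1 x h1 h2).2

lemma mono_consec {f : ℕ → ℕ} {lo hi : ℕ} (h : ∀ i, lo ≤ i → i + 1 ≤ hi → f i ≤ f (i + 1)) :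
    ∀ x y, lo ≤ x → x ≤ y → y ≤ hi → f x ≤ f y := by
  intro x y hx hxy hy
  have key : ∀ k, x + k ≤ hi → f x ≤ f (x + k) := by
    intro k
    induction k with
    | zero => intro _; exact le_rfl
    | succ k ih =>
      intro hk
      exact (ih (by omega)).trans (h (x + k) (by omega) (by omega))
  have := key (y - x) (by omega)
  rwa [Nat.add_sub_cancel' hxy] at this

lemma anti_consec {f : ℕ → ℕ} {lo hi : ℕ} (h : ∀ i, lo ≤ i → i + 1 ≤ hi → f (i + 1) ≤ f i) :
    ∀ x y, lo ≤ x → x ≤ y → y ≤ hi → f y ≤ f x := by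
  intro x y hx hxy hy
  have key : ∀ k, x + k ≤ hi → f (x + k) ≤ f x := by
    intro k
    induction k with
    | zero => intro _; exact le_rfl
    | succ k ih =>
      intro hk
      exact (h (x + k) (by omega) (by omega)).trans (ih (by omega))
  have := key (y - x) (by omega)
  rwa [Nat.add_sub_cancel' hxy] at this

lemma cyclic_iff_shapeC {n : ℕ} {f : ℕ → ℕ} (hn : 1 ≤ n) (hf : f ∈ Dn n) :
    Cyclic n f ↔ ShapeC n f := by
  have f1 : f 1 = 1 := dn_one hn hf
  constructor
  · intro hc
    by_cases hD : ∀ i, 1 ≤ i → i + 1 ≤ n → f i ≤ f (i + 1)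
    · exact ⟨n, hn, le_rfl, mono_consec hD, fun x hx hx' => absurd hx (by omega)⟩
    · push_neg at hD
      obtain ⟨i₀, hi₀1, hi₀n, hdesc⟩ := hD
      have hi₀mem : i₀ ∈ (Finset.Icc 1 n).filter (fun i => nxt n f i < f i) := by
        refine Finset.mem_filter.2 ⟨Finset.mem_Icc.2 ⟨hi₀1, by omega⟩, ?_⟩
        rw [nxt, if_neg (by omega)]; exact hdesc
      have huniq : ∀ j ∈ (Finset.Icc 1 n).filter (fun i => nxt n f i < f i), j = i₀ :=
        fun j hj => Finset.card_le_one.1 hc j hj i₀ hi₀mem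
      have hnodesc : ∀ i, 1 ≤ i → i + 1 ≤ n → i ≠ i₀ → f i ≤ f (i + 1) := by
        intro i h1 h2 hne
        by_contra hlt
        exact hne (huniq i (Finset.mem_filter.2 ⟨Finset.mem_Icc.2 ⟨h1, by omega⟩,
          by rw [nxt, if_neg (by omega)]; omega⟩))
      have hfn : f n = 1 := by
        have : n ∉ (Finset.Icc 1 n).filter (fun i => nxt n f i < f i) := by
          intro hmem; have := huniq n hmem; omega
        have h2 : ¬ (nxt n f n < f n) := fun hh => this (Finset.mem_filter.2
          ⟨Finset.mem_Icc.2 ⟨hn, le_rfl⟩, hh⟩)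
        rw [nxt, if_pos rfl, f1] at h2
        have := dn_lb hf hn le_rfl
        omega
      refine ⟨i₀, hi₀1, by omega, mono_consec (fun i h1 h2 => hnodesc i h1 (by omega) (by omega)),
        ?_⟩
      intro x hx hxn
      have hlb := dn_lb hf (by omega : 1 ≤ x) hxn
      have hmono3 := mono_consec (f := f) (lo := i₀ + 1) (hi := n)
        (fun i h1 h2 => hnodesc i (by omega) h2 (by omega)) x n (by omega) hxn le_rfl
      omega
  · rintro ⟨d, hd1, hdn, hmono, htail⟩
    have hsub : (Finset.Icc 1 n).filter (fun i => nxt n f i < f i) ⊆ {d} := by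
      intro i hi
      rw [Finset.mem_filter, Finset.mem_Icc] at hi
      obtain ⟨⟨hi1, hin⟩, hdesc⟩ := hi
      rw [Finset.mem_singleton]
      rcases eq_or_lt_of_le hin with rfl | hilt
      · rw [nxt, if_pos rfl, f1] at hdesc
        by_contra hne
        have : f i = 1 := htail i (by omega) le_rfl
        omega
      · rw [nxt, if_neg (by omega)] at hdesc
        by_contra hne
        rcases le_or_gt (i + 1) d with hle | hgt
        · exact absurd (hmono i (i + 1) hi1 (by omega) hle) (by omega)
        · have h1 : f i = 1 := htail i (by omega) (by omega)
          have := dn_lb hf (by omega : 1 ≤ i + 1) (by omega)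
          omega
    calc ((Finset.Icc 1 n).filter (fun i => nxt n f i < f i)).card
        ≤ ({d} : Finset ℕ).card := Finset.card_le_card hsub
      _ = 1 := Finset.card_singleton d

lemma anticyclic_iff_shapeA {n : ℕ} {f : ℕ → ℕ} (hn : 1 ≤ n) (hf : f ∈ Dn n) :
    AntiCyclic n f ↔ ShapeA n f := by
  have f1 : f 1 = 1 := dn_one hn hf
  constructor
  · intro hc
    by_cases hD : ∀ i, 1 ≤ i → i + 1 ≤ n → f (i + 1) ≤ f i
    · refine ⟨n, hn, le_rfl, ?_, fun x y hx hxy hy => absurd hx (by omega)⟩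
      intro x h1 h2
      have := anti_consec hD 1 x le_rfl h1 h2
      have := dn_lb hf h1 h2
      omega
    · push_neg at hD
      obtain ⟨a₀, ha₀1, ha₀n, hasc⟩ := hD
      have ha₀mem : a₀ ∈ (Finset.Icc 1 n).filter (fun i => f i < nxt n f i) := by
        refine Finset.mem_filter.2 ⟨Finset.mem_Icc.2 ⟨ha₀1, by omega⟩, ?_⟩
        rw [nxt, if_neg (by omega)]; exact hasc
      have huniq : ∀ j ∈ (Finset.Icc 1 n).filter (fun i => f i < nxt n f i), j = a₀ :=
        fun j hj => Finset.card_le_one.1 hc j hj a₀ ha₀mem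
      have hnoasc : ∀ i, 1 ≤ i → i + 1 ≤ n → i ≠ a₀ → f (i + 1) ≤ f i := by
        intro i h1 h2 hne
        by_contra hlt
        exact hne (huniq i (Finset.mem_filter.2 ⟨Finset.mem_Icc.2 ⟨h1, by omega⟩,
          by rw [nxt, if_neg (by omega)]; omega⟩))
      refine ⟨a₀, ha₀1, by omega, ?_, anti_consec (fun i h1 h2 => hnoasc i (by omega) h2 (by omega))⟩
      intro x h1 h2
      have := anti_consec (f := f) (lo := 1) (hi := a₀)
        (fun i hi1 hi2 => hnoasc i hi1 (by omega) (by omega)) 1 x le_rfl h1 h2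
      have := dn_lb hf h1 (by omega)
      omega
  · rintro ⟨a, ha1, han, hpre, hanti⟩
    have hsub : (Finset.Icc 1 n).filter (fun i => f i < nxt n f i) ⊆ {a} := by
      intro i hi
      rw [Finset.mem_filter, Finset.mem_Icc] at hi
      obtain ⟨⟨hi1, hin⟩, hasc⟩ := hi
      rw [Finset.mem_singleton]
      rcases eq_or_lt_of_le hin with rfl | hilt
      · rw [nxt, if_pos rfl, f1] at hasc
        have := dn_lb hf hi1 le_rfl
        omega
      · rw [nxt, if_neg (by omega)] at hasc
        by_contra hne
        rcases le_or_gt (i + 1) a with hle | hgt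
        · have : f (i + 1) = 1 := hpre (i + 1) (by omega) hle
          have := dn_lb hf hi1 (by omega)
          omega
        · have : i ≤ a → False := fun h => hne (by omega)
          have hia : a < i := by omega
          exact absurd (hanti i (i + 1) hia (by omega) (by omega)) (by omega)
    calc ((Finset.Icc 1 n).filter (fun i => f i < nxt n f i)).card
        ≤ ({a} : Finset ℕ).card := Finset.card_le_card hsub
      _ = 1 := Finset.card_singleton a

lemma dn_comp {n : ℕ} {f g : ℕ → ℕ} (hf : f ∈ Dn n) (hg : g ∈ Dn n) : comp f g ∈ Dn n := by
  refine ⟨⟨fun x h1 h2 => ?_, fun x hx => ?_⟩, fun x h1 h2 => ?_⟩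
  · exact ⟨dn_lb hg (dn_lb hf h1 h2) (dn_ub hf h1 h2), dn_ub hg (dn_lb hf h1 h2) (dn_ub hf h1 h2)⟩
  · show g (f x) = x
    rw [hf.1.2 x hx, hg.1.2 x hx]
  · exact le_trans (hg.2 (f x) (dn_lb hf h1 h2) (dn_ub hf h1 h2)) (hf.2 x h1 h2)

lemma exists_greatest {P : ℕ → Prop} [DecidablePred P] {n₀ N : ℕ} (h₀ : P n₀) (h₀N : n₀ ≤ N) :
    ∃ e, P e ∧ n₀ ≤ e ∧ e ≤ N ∧ ∀ x, x ≤ N → P x → x ≤ e :=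
  ⟨Nat.findGreatest P N, Nat.findGreatest_spec h₀N h₀, Nat.le_findGreatest h₀N h₀,
    Nat.findGreatest_le N, fun x hx hPx => Nat.le_findGreatest hx hPx⟩

lemma shapeC_comp_CC {n : ℕ} {f g : ℕ → ℕ} (hn : 1 ≤ n) (hf : f ∈ Dn n) (hg : g ∈ Dn n)
    (hfs : ShapeC n f) (hgs : ShapeC n g) : ShapeC n (comp f g) := by
  obtain ⟨d₁, hd₁1, hd₁n, fmono, ftail⟩ := hfs
  obtain ⟨d₂, hd₂1, hd₂n, gmono, gtail⟩ := hgs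
  have f1 : f 1 = 1 := dn_one hn hf
  have g1 : g 1 = 1 := dn_one hn hg
  obtain ⟨e, ⟨he1, hed₁, hfe⟩, -, -, hemax⟩ :=
    exists_greatest (P := fun z => 1 ≤ z ∧ z ≤ d₁ ∧ f z ≤ d₂)
      (n₀ := 1) (N := d₁) ⟨le_rfl, hd₁1, by omega⟩ hd₁1
  refine ⟨e, he1, by omega, ?_, ?_⟩
  · intro x y hx hxy hy
    have hfxy : f x ≤ f y := fmono x y hx hxy (by omega)
    have hfye : f y ≤ f e := fmono y e (by omega) hy hed₁
    exact gmono (f x) (f y) (dn_lb hf hx (by omega)) hfxy (le_trans hfye hfe)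
  · intro x hex hxn
    show g (f x) = 1
    rcases le_or_gt x d₁ with hxd | hxd
    · have hnot : ¬ (f x ≤ d₂) := fun hcon =>
        absurd (hemax x hxd ⟨by omega, hxd, hcon⟩) (by omega)
      exact gtail (f x) (by omega) (dn_ub hf (by omega) hxn)
    · rw [ftail x hxd hxn, g1]

lemma shapeA_comp_CA {n : ℕ} {f g : ℕ → ℕ} (hn : 1 ≤ n) (hf : f ∈ Dn n) (hg : g ∈ Dn n)
    (hfs : ShapeC n f) (hgs : ShapeA n g) : ShapeA n (comp f g) := by
  obtain ⟨d₁, hd₁1, hd₁n, fmono, ftail⟩ := hfs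
  obtain ⟨a₂, ha₂1, ha₂n, gpre, ganti⟩ := hgs
  have f1 : f 1 = 1 := dn_one hn hf
  have g1 : g 1 = 1 := dn_one hn hg
  obtain ⟨a, ⟨ha1, had₁, hfa⟩, -, -, hamax⟩ :=
    exists_greatest (P := fun z => 1 ≤ z ∧ z ≤ d₁ ∧ f z ≤ a₂)
      (n₀ := 1) (N := d₁) ⟨le_rfl, hd₁1, by omega⟩ hd₁1
  refine ⟨a, ha1, by omega, ?_, ?_⟩
  · intro x h1 h2
    show g (f x) = 1
    have : f x ≤ f a := fmono x a h1 h2 had₁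
    exact gpre (f x) (dn_lb hf h1 (by omega)) (by omega)
  · intro x y hax hxy hyn
    show g (f y) ≤ g (f x)
    rcases le_or_gt y d₁ with hyd | hyd
    · have hxd : x ≤ d₁ := le_trans hxy hyd
      have hnot : ¬ (f x ≤ a₂) := fun hcon =>
        absurd (hamax x hxd ⟨by omega, hxd, hcon⟩) (by omega)
      have hfxy : f x ≤ f y := fmono x y (by omega) hxy hyd
      exact ganti (f x) (f y) (by omega) hfxy (dn_ub hf (by omega) (by omega))
    · rw [ftail y hyd hyn, g1]
      exact dn_lb hg (dn_lb hf (by omega) (by omega)) (dn_ub hf (by omega) (by omega))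

lemma shapeA_comp_AC {n : ℕ} {f g : ℕ → ℕ} (hn : 1 ≤ n) (hf : f ∈ Dn n) (hg : g ∈ Dn n)
    (hfs : ShapeA n f) (hgs : ShapeC n g) : ShapeA n (comp f g) := by
  obtain ⟨a₁, ha₁1, ha₁n, fpre, fanti⟩ := hfs
  obtain ⟨d₂, hd₂1, hd₂n, gmono, gtail⟩ := hgs
  have g1 : g 1 = 1 := dn_one hn hg
  obtain ⟨a, ⟨ha1, han, hPa⟩, -, -, hamax⟩ :=
    exists_greatest (P := fun z => 1 ≤ z ∧ z ≤ n ∧ (z ≤ a₁ ∨ d₂ < f z))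
      (n₀ := 1) (N := n) ⟨le_rfl, hn, Or.inl ha₁1⟩ hn
  have hdc : ∀ x, 1 ≤ x → x ≤ a → (x ≤ a₁ ∨ d₂ < f x) := by
    intro x h1 h2
    rcases hPa with hle | hfa
    · exact Or.inl (by omega)
    · rcases le_or_gt x a₁ with h | h
      · exact Or.inl h
      · exact Or.inr (lt_of_lt_of_le hfa (fanti x a h h2 han))
  refine ⟨a, ha1, han, ?_, ?_⟩
  · intro x h1 h2
    show g (f x) = 1
    rcases hdc x h1 h2 with h | h
    · rw [fpre x h1 h, g1]
    · exact gtail (f x) h (dn_ub hf h1 (by omega))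
  · intro x y hax hxy hyn
    show g (f y) ≤ g (f x)
    have hxP : ¬ (x ≤ a₁ ∨ d₂ < f x) := fun hcon =>
      absurd (hamax x (by omega) ⟨by omega, by omega, hcon⟩) (by omega)
    have hyP : ¬ (y ≤ a₁ ∨ d₂ < f y) := fun hcon =>
      absurd (hamax y hyn ⟨by omega, hyn, hcon⟩) (by omega)
    push_neg at hxP hyP
    have hfyx : f y ≤ f x := fanti x y (by omega) hxy hyn
    exact gmono (f y) (f x) (dn_lb hf (by omega) hyn) hfyx hxP.2

lemma shapeC_comp_AA {n : ℕ} {f g : ℕ → ℕ} (hn : 1 ≤ n) (hf : f ∈ Dn n) (hg : g ∈ Dn n)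
    (hfs : ShapeA n f) (hgs : ShapeA n g) : ShapeC n (comp f g) := by
  obtain ⟨a₁, ha₁1, ha₁n, fpre, fanti⟩ := hfs
  obtain ⟨a₂, ha₂1, ha₂n, gpre, ganti⟩ := hgs
  have g1 : g 1 = 1 := dn_one hn hg
  obtain ⟨d, ⟨hd1, hdn, hPd⟩, -, -, hdmax⟩ :=
    exists_greatest (P := fun z => 1 ≤ z ∧ z ≤ n ∧ (z ≤ a₁ ∨ a₂ < f z))
      (n₀ := 1) (N := n) ⟨le_rfl, hn, Or.inl ha₁1⟩ hn
  have hdc : ∀ x, 1 ≤ x → x ≤ d → (x ≤ a₁ ∨ a₂ < f x) := by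
    intro x h1 h2
    rcases hPd with hle | hfd
    · exact Or.inl (by omega)
    · rcases le_or_gt x a₁ with h | h
      · exact Or.inl h
      · exact Or.inr (lt_of_lt_of_le hfd (fanti x d h h2 hdn))
  refine ⟨d, hd1, hdn, ?_, ?_⟩
  · intro x y hx hxy hy
    show g (f x) ≤ g (f y)
    rcases le_or_gt x a₁ with hxa | hxa
    · rw [fpre x hx hxa, g1]
      exact dn_lb hg (dn_lb hf (by omega) (by omega)) (dn_ub hf (by omega) (by omega))
    · have hyP := hdc y (by omega) hy
      have hxP := hdc x hx (by omega)
      have hfx : a₂ < f x := by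
        rcases hxP with h | h
        · omega
        · exact h
      have hfy : a₂ < f y := by
        rcases hyP with h | h
        · omega
        · exact h
      have hfyx : f y ≤ f x := fanti x y hxa hxy (by omega)
      exact ganti (f y) (f x) hfy hfyx (dn_ub hf (by omega) (by omega))
  · intro x hdx hxn
    show g (f x) = 1
    have hxP : ¬ (x ≤ a₁ ∨ a₂ < f x) := fun hcon =>
      absurd (hdmax x hxn ⟨by omega, hxn, hcon⟩) (by omega)
    push_neg at hxP
    exact gpre (f x) (dn_lb hf (by omega) hxn) hxP.2

lemma ordn_comp {n : ℕ} {f g : ℕ → ℕ} (hn : 1 ≤ n) (hf : f ∈ ORDn n) (hg : g ∈ ORDn n) :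
    comp f g ∈ ORDn n := by
  obtain ⟨hfd, hfor⟩ := hf
  obtain ⟨hgd, hgor⟩ := hg
  have hdc := dn_comp hfd hgd
  refine ⟨hdc, ?_⟩
  rcases hfor with hfc | hfa <;> rcases hgor with hgc | hga
  · exact Or.inl ((cyclic_iff_shapeC hn hdc).2 (shapeC_comp_CC hn hfd hgd
      ((cyclic_iff_shapeC hn hfd).1 hfc) ((cyclic_iff_shapeC hn hgd).1 hgc)))
  · exact Or.inr ((anticyclic_iff_shapeA hn hdc).2 (shapeA_comp_CA hn hfd hgd
      ((cyclic_iff_shapeC hn hfd).1 hfc) ((anticyclic_iff_shapeA hn hgd).1 hga)))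
  · exact Or.inr ((anticyclic_iff_shapeA hn hdc).2 (shapeA_comp_AC hn hfd hgd
      ((anticyclic_iff_shapeA hn hfd).1 hfa) ((cyclic_iff_shapeC hn hgd).1 hgc)))
  · exact Or.inl ((cyclic_iff_shapeC hn hdc).2 (shapeC_comp_AA hn hfd hgd
      ((anticyclic_iff_shapeA hn hfd).1 hfa) ((anticyclic_iff_shapeA hn hgd).1 hga)))

lemma im_comp_subset {n : ℕ} {f g : ℕ → ℕ} (hf : f ∈ Dn n) :
    im n (comp f g) ⊆ im n g := by
  intro v hv
  rw [im, Finset.mem_image] at hv ⊢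
  obtain ⟨x, hx, hxv⟩ := hv
  rw [Finset.mem_Icc] at hx
  exact ⟨f x, Finset.mem_Icc.2 ⟨dn_lb hf hx.1 hx.2, dn_ub hf hx.1 hx.2⟩, hxv⟩

lemma ordr_comp {n r : ℕ} {f g : ℕ → ℕ} (hn : 1 ≤ n) (hf : f ∈ ORDr n r) (hg : g ∈ ORDr n r) :
    comp f g ∈ ORDr n r :=
  ⟨ordn_comp hn hf.1 hg.1,
    le_trans (Finset.card_le_card (im_comp_subset hf.1.1)) hg.2⟩

/-- Arithmetic context for the parameters: `p = m - r̂`, `q = 2m - p - 2`. -/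
structure Ctx (n m p q r' : ℕ) : Prop where
  hm : 3 ≤ m
  hp : p + 3 ≤ m
  hq : q + p + 2 = 2 * m
  hqn : q < n
  hpr : p = m - r'

/-- The image of `λ_{m,r̂}`. -/
def S0 (p m : ℕ) : Finset ℕ := insert 1 (Finset.Icc (p + 2) m)

lemma mem_S0 {p m v : ℕ} : v ∈ S0 p m ↔ v = 1 ∨ (p + 2 ≤ v ∧ v ≤ m) := by
  simp [S0, Finset.mem_insert, Finset.mem_Icc, and_comm]

lemma card_S0 {p m : ℕ} (hp : p + 3 ≤ m) : (S0 p m).card = m - p := by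
  rw [S0, Finset.card_insert_of_notMem (by rw [Finset.mem_Icc]; omega), Nat.card_Icc]
  omega

section CtxLemmas

variable {n m p q r' : ℕ}

lemma lam_out (C : Ctx n m p q r') {x : ℕ} (h : ¬(1 ≤ x ∧ x ≤ n)) : lam n r' m x = x := by
  rw [lam, if_pos h]

lemma lam_low (C : Ctx n m p q r') {x : ℕ} (h1 : 1 ≤ x) (h2 : x < m) : lam n r' m x = 1 := by
  have hm := C.hm; have hp := C.hp; have hq := C.hq; have hqn := C.hqn; have hpr := C.hpr
  rw [lam, if_neg (by omega), if_pos h2]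

lemma lam_mid (C : Ctx n m p q r') {x : ℕ} (h1 : m ≤ x) (h2 : x ≤ q) :
    lam n r' m x = 2 * m - x := by
  have hm := C.hm; have hp := C.hp; have hq := C.hq; have hqn := C.hqn; have hpr := C.hpr
  have hmin : min (2 * m - (m - r') - 2) n = q := by omega
  rw [lam, if_neg (by omega), if_neg (by omega), hmin, if_pos h2]

lemma lam_high (C : Ctx n m p q r') {x : ℕ} (h1 : q < x) (h2 : x ≤ n) : lam n r' m x = 1 := by
  have hm := C.hm; have hp := C.hp; have hq := C.hq; have hqn := C.hqn; have hpr := C.hpr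
  have hmin : min (2 * m - (m - r') - 2) n = q := by omega
  rw [lam, if_neg (by omega), if_neg (by omega), hmin, if_neg (by omega)]

lemma im_lam (C : Ctx n m p q r') : im n (lam n r' m) = S0 p m := by
  have hm := C.hm; have hp := C.hp; have hq := C.hq; have hqn := C.hqn; have hpr := C.hpr
  apply Finset.Subset.antisymm
  · intro v hv
    rw [im, Finset.mem_image] at hv
    obtain ⟨x, hx, rfl⟩ := hv
    rw [Finset.mem_Icc] at hx
    rcases lt_or_ge x m with h | h
    · rw [lam_low C hx.1 h, mem_S0]; exact Or.inl rfl
    · rcases le_or_gt x q with h2 | h2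
      · rw [lam_mid C h h2, mem_S0]; exact Or.inr ⟨by omega, by omega⟩
      · rw [lam_high C h2 hx.2, mem_S0]; exact Or.inl rfl
  · intro v hv
    rw [mem_S0] at hv
    rw [im, Finset.mem_image]
    rcases hv with rfl | ⟨h1, h2⟩
    · exact ⟨1, Finset.mem_Icc.2 ⟨le_rfl, by omega⟩, lam_low C le_rfl (by omega)⟩
    · refine ⟨2 * m - v, Finset.mem_Icc.2 ⟨by omega, by omega⟩, ?_⟩
      rw [lam_mid C (by omega) (by omega)]
      omega

lemma preMin_eq_of {n : ℕ} {f : ℕ → ℕ} {v y₀ : ℕ} (h1 : 1 ≤ y₀) (h2 : y₀ ≤ n)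
    (h3 : f y₀ = v) (hmin : ∀ y, 1 ≤ y → y < y₀ → f y ≠ v) : preMin n f v = y₀ := by
  have hmem : y₀ ∈ {y | 1 ≤ y ∧ y ≤ n ∧ f y = v} := ⟨h1, h2, h3⟩
  have hle : sInf {y | 1 ≤ y ∧ y ≤ n ∧ f y = v} ≤ y₀ := Nat.sInf_le hmem
  have hmem2 := Nat.sInf_mem (⟨y₀, hmem⟩ : {y | 1 ≤ y ∧ y ≤ n ∧ f y = v}.Nonempty)
  obtain ⟨ha, hb, hc⟩ := hmem2
  rcases eq_or_lt_of_le hle with h | h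
  · exact h
  · exact absurd hc (hmin _ ha h)

lemma apply_preMin {n : ℕ} {f : ℕ → ℕ} {v : ℕ} (hv : v ∈ im n f) :
    1 ≤ preMin n f v ∧ preMin n f v ≤ n ∧ f (preMin n f v) = v := by
  rw [im, Finset.mem_image] at hv
  obtain ⟨x, hx, hxv⟩ := hv
  rw [Finset.mem_Icc] at hx
  exact Nat.sInf_mem (⟨x, hx.1, hx.2, hxv⟩ : {y | 1 ≤ y ∧ y ≤ n ∧ f y = v}.Nonempty)

lemma preMin_lam_one (C : Ctx n m p q r') : preMin n (lam n r' m) 1 = 1 :=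
  preMin_eq_of le_rfl (by have := C.hqn; omega) (lam_low C le_rfl (by have := C.hm; omega))
    (fun y h1 h2 => by omega)

lemma preMin_lam_mid (C : Ctx n m p q r') {v : ℕ} (h1 : p + 2 ≤ v) (h2 : v ≤ m) :
    preMin n (lam n r' m) v = 2 * m - v := by
  have hm := C.hm; have hp := C.hp; have hq := C.hq; have hqn := C.hqn; have hpr := C.hpr
  refine preMin_eq_of (by omega) (by omega) ?_ ?_
  · rw [lam_mid C (by omega) (by omega)]; omega
  · intro y hy1 hy2
    rcases lt_or_ge y m with h | h
    · rw [lam_low C hy1 h]; omega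
    · rw [lam_mid C h (by omega)]; omega

/-- generic membership criterion for `Lset`, given the values of `f`. -/
lemma mem_Lset_of_pattern (C : Ctx n m p q r') {f : ℕ → ℕ} (hf : f ∈ ORDn n)
    (him : im n f = S0 p m)
    (flow : ∀ x, 1 ≤ x → x < m → f x = 1)
    (fmid : ∀ x, m ≤ x → x ≤ q → f x = 2 * m - x) :
    f ∈ Lset n r' m := by
  have hm := C.hm; have hp := C.hp; have hq := C.hq; have hqn := C.hqn; have hpr := C.hpr
  refine ⟨hf, him.trans (im_lam C).symm, ?_⟩
  intro v hv
  rw [im_lam C, mem_S0] at hv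
  rcases hv with rfl | ⟨h1, h2⟩
  · rw [preMin_lam_one C]
    exact preMin_eq_of le_rfl (by omega) (flow 1 le_rfl (by omega)) (fun y hy1 hy2 => by omega)
  · rw [preMin_lam_mid C h1 h2]
    refine preMin_eq_of (by omega) (by omega) ?_ ?_
    · rw [fmid _ (by omega) (by omega)]; omega
    · intro y hy1 hy2
      rcases lt_or_ge y m with h | h
      · rw [flow y hy1 h]; omega
      · rw [fmid y h (by omega)]; omega

lemma lam_mem_Dn (C : Ctx n m p q r') : lam n r' m ∈ Dn n := by
  have hm := C.hm; have hp := C.hp; have hq := C.hq; have hqn := C.hqn; have hpr := C.hpr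
  refine ⟨⟨fun x h1 h2 => ?_, fun x hx => lam_out C hx⟩, fun x h1 h2 => ?_⟩
  · rcases lt_or_ge x m with h | h
    · rw [lam_low C h1 h]; omega
    · rcases le_or_gt x q with h' | h'
      · rw [lam_mid C h h']; omega
      · rw [lam_high C h' h2]; omega
  · rcases lt_or_ge x m with h | h
    · rw [lam_low C h1 h]; omega
    · rcases le_or_gt x q with h' | h'
      · rw [lam_mid C h h']; omega
      · rw [lam_high C h' h2]; omega

lemma lam_shapeA (C : Ctx n m p q r') : ShapeA n (lam n r' m) := by
  have hm := C.hm; have hp := C.hp; have hq := C.hq; have hqn := C.hqn; have hpr := C.hpr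
  refine ⟨m - 1, by omega, by omega, fun x h1 h2 => lam_low C h1 (by omega), ?_⟩
  intro x y hax hxy hyn
  rcases le_or_gt y q with hyq | hyq
  · rw [lam_mid C (x := y) (by omega) hyq, lam_mid C (x := x) (by omega) (by omega)]; omega
  · rw [lam_high C hyq hyn]
    rcases lt_or_ge x m with h | h
    · rw [lam_low C (by omega) h]
    · rcases le_or_gt x q with h' | h'
      · rw [lam_mid C h h']; omega
      · rw [lam_high C h' (by omega)]

lemma lam_mem_ORDn (C : Ctx n m p q r') : lam n r' m ∈ ORDn n := by
  refine ⟨lam_mem_Dn C, Or.inr ?_⟩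
  exact (anticyclic_iff_shapeA (by have := C.hqn; omega) (lam_mem_Dn C)).2 (lam_shapeA C)

lemma lam_mem_Lset (C : Ctx n m p q r') : lam n r' m ∈ Lset n r' m :=
  ⟨lam_mem_ORDn C, rfl, fun _ _ => rfl⟩

lemma not_shapeC_mid (C : Ctx n m p q r') {h : ℕ → ℕ}
    (hmid : ∀ x, m ≤ x → x ≤ q → h x = 2 * m - x) : ¬ ShapeC n h := by
  have hm := C.hm; have hp := C.hp; have hq := C.hq; have hqn := C.hqn
  rintro ⟨d, hd1, hdn, hmono, htail⟩
  have hm1 : h m = m := by rw [hmid m le_rfl (by omega)]; omega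
  have hm2 : h (m + 1) = 2 * m - (m + 1) := hmid (m + 1) (by omega) (by omega)
  rcases le_or_gt (m + 1) d with hle | hlt
  · have := hmono m (m + 1) (by omega) (by omega) hle
    omega
  · have := htail (m + 1) (by omega) (by omega)
    omega

lemma classify (C : Ctx n m p q r') {β : ℕ → ℕ} (hβ : β ∈ Lset n r' m) :
    (∀ x, 1 ≤ x → x < m → β x = 1) ∧ (∀ x, m ≤ x → x ≤ q → β x = 2 * m - x) ∧
    (∃ k, q + k ≤ n ∧ ∀ x, q < x → x ≤ n → β x = if x ≤ q + k then p + 2 else 1) := by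
  have hm := C.hm; have hp := C.hp; have hq := C.hq; have hqn := C.hqn
  obtain ⟨hORD, him, hpre⟩ := hβ
  have himS : im n β = S0 p m := him.trans (im_lam C)
  have hmid : ∀ x, m ≤ x → x ≤ q → β x = 2 * m - x := by
    intro x h1 h2
    have hv : (2 * m - x) ∈ im n β := by rw [himS, mem_S0]; right; constructor <;> omega
    have h3 := apply_preMin hv
    have h4 : preMin n β (2 * m - x) = x := by
      rw [hpre _ (him ▸ hv), preMin_lam_mid C (by omega) (by omega)]
      omega
    rw [h4] at h3
    exact h3.2.2
  have hlow : ∀ x, 1 ≤ x → x < m → β x = 1 := by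
    intro x h1 h2
    have hmem : β x ∈ im n β := by
      rw [im]; exact Finset.mem_image_of_mem β (Finset.mem_Icc.2 ⟨h1, by omega⟩)
    rw [himS, mem_S0] at hmem
    rcases hmem with h | ⟨ha, hb⟩
    · exact h
    · exfalso
      have hv : β x ∈ im n β := by rw [himS, mem_S0]; right; exact ⟨ha, hb⟩
      have h4 : preMin n β (β x) = 2 * m - β x := by
        rw [hpre _ (him ▸ hv), preMin_lam_mid C ha hb]
      have h5 : preMin n β (β x) ≤ x := Nat.sInf_le ⟨h1, by omega, rfl⟩
      omega
  have hDn : β ∈ Dn n := hORD.1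
  have hA : ShapeA n β := by
    rcases hORD.2 with h | h
    · exact absurd ((cyclic_iff_shapeC (by omega) hDn).1 h) (not_shapeC_mid C hmid)
    · exact (anticyclic_iff_shapeA (by omega) hDn).1 h
  obtain ⟨a, ha1, han, hpre1, hanti⟩ := hA
  have ham : a < m := by
    by_contra hcon
    have h1 := hpre1 m (by omega) (by omega)
    have h2 := hmid m le_rfl (by omega)
    omega
  have hq2 : β q = p + 2 := by rw [hmid q (by omega) le_rfl]; omega
  have htail2 : ∀ x, q < x → x ≤ n → β x = 1 ∨ β x = p + 2 := by
    intro x h1 h2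
    have hle : β x ≤ β q := hanti q x (by omega) (by omega) h2
    have hmem : β x ∈ im n β := by
      rw [im]; exact Finset.mem_image_of_mem β (Finset.mem_Icc.2 ⟨by omega, h2⟩)
    rw [himS, mem_S0] at hmem
    rcases hmem with h | ⟨ha', hb'⟩
    · exact Or.inl h
    · right; omega
  obtain ⟨Mx, hPM, hqM, hMn, hMmax⟩ :=
    exists_greatest (P := fun z => q ≤ z ∧ z ≤ n ∧ β z = p + 2) (n₀ := q) (N := n)
      ⟨le_rfl, by omega, hq2⟩ (by omega)
  refine ⟨hlow, hmid, Mx - q, by omega, ?_⟩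
  intro x h1 h2
  have hMxq : q + (Mx - q) = Mx := by omega
  by_cases hxM : x ≤ q + (Mx - q)
  · rw [if_pos hxM]
    have hge : β Mx ≤ β x := hanti x Mx (by omega) (by omega) hPM.2.1
    rcases htail2 x h1 h2 with h | h
    · rw [hPM.2.2] at hge; omega
    · exact h
  · rw [if_neg hxM]
    rcases htail2 x h1 h2 with h | h
    · exact h
    · exact absurd (hMmax x h2 ⟨by omega, h2, h⟩) (by omega)

lemma lset_not_cyclic (C : Ctx n m p q r') {β : ℕ → ℕ} (hβ : β ∈ Lset n r' m) :
    ¬ Cyclic n β := fun hc =>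
  not_shapeC_mid C (classify C hβ).2.1
    ((cyclic_iff_shapeC (by have := C.hqn; omega) hβ.1.1).1 hc)

end CtxLemmas

/-- The cyclic helper map used to generate `β` from `α`. -/
def Vmap (n m q k : ℕ) : ℕ → ℕ := fun x =>
  if ¬(1 ≤ x ∧ x ≤ n) then x
  else if x < m then 1
  else if x ≤ q then x
  else if x ≤ q + k then q
  else 1

section GenLemma

variable {n m p q r' : ℕ}

lemma gen_lemma (C : Ctx n m p q r') {r : ℕ} (hrr : m - p ≤ r) {α β : ℕ → ℕ}
    (hα : α ∈ Lset n r' m) (hβ : β ∈ Lset n r' m) :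
    gen (OPDr n r ∪ {α}) β := by
  have hm := C.hm; have hp := C.hp; have hq := C.hq; have hqn := C.hqn
  obtain ⟨αlow, αmid, -⟩ := classify C hα
  obtain ⟨βlow, βmid, k, hkn, βtail⟩ := classify C hβ
  have hαDn : α ∈ Dn n := hα.1.1
  have hβDn : β ∈ Dn n := hβ.1.1
  have Vout : ∀ x, ¬(1 ≤ x ∧ x ≤ n) → Vmap n m q k x = x := by
    intro x h; simp only [Vmap]; rw [if_pos h]
  have Vlow : ∀ x, 1 ≤ x → x < m → Vmap n m q k x = 1 := by
    intro x h1 h2; simp only [Vmap]; rw [if_neg (by omega), if_pos h2]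
  have Vmid : ∀ x, m ≤ x → x ≤ q → Vmap n m q k x = x := by
    intro x h1 h2; simp only [Vmap]
    rw [if_neg (by omega), if_neg (by omega), if_pos h2]
  have Vhi1 : ∀ x, q < x → x ≤ q + k → Vmap n m q k x = q := by
    intro x h1 h2; simp only [Vmap]
    rw [if_neg (by omega), if_neg (by omega), if_neg (by omega), if_pos h2]
  have Vhi2 : ∀ x, q + k < x → x ≤ n → Vmap n m q k x = 1 := by
    intro x h1 h2; simp only [Vmap]
    rw [if_neg (by omega), if_neg (by omega), if_neg (by omega), if_neg (by omega)]
  have Vcases : ∀ x, 1 ≤ x → x ≤ n →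
      Vmap n m q k x = 1 ∨ (Vmap n m q k x = x ∧ m ≤ x ∧ x ≤ q) ∨
        (Vmap n m q k x = q ∧ q < x) := by
    intro x h1 h2
    rcases lt_or_ge x m with h | h
    · exact Or.inl (Vlow x h1 h)
    · rcases le_or_gt x q with h' | h'
      · exact Or.inr (Or.inl ⟨Vmid x h h', h, h'⟩)
      · rcases le_or_gt x (q + k) with h'' | h''
        · exact Or.inr (Or.inr ⟨Vhi1 x h' h'', h'⟩)
        · exact Or.inl (Vhi2 x h'' h2)
  have VDn : Vmap n m q k ∈ Dn n := by
    refine ⟨⟨fun x h1 h2 => ?_, Vout⟩, fun x h1 h2 => ?_⟩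
    · rcases Vcases x h1 h2 with h | ⟨h, h', h''⟩ | ⟨h, h'⟩ <;> rw [h] <;> omega
    · rcases Vcases x h1 h2 with h | ⟨h, h', h''⟩ | ⟨h, h'⟩ <;> rw [h] <;> omega
  have VshC : ShapeC n (Vmap n m q k) := by
    refine ⟨q + k, by omega, hkn, ?_, Vhi2⟩
    intro x y hx hxy hy
    rcases lt_or_ge x m with hxm | hxm
    · rw [Vlow x hx hxm]
      rcases Vcases y (by omega) (by omega) with h | ⟨h, h', h''⟩ | ⟨h, h'⟩ <;> rw [h] <;> omega
    · rcases le_or_gt y q with hyq | hyq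
      · rw [Vmid y (by omega) hyq, Vmid x hxm (by omega)]; exact hxy
      · rw [Vhi1 y hyq hy]
        rcases le_or_gt x q with hxq | hxq
        · rw [Vmid x hxm hxq]; exact hxq
        · rw [Vhi1 x hxq (by omega)]
  have Vcard : (im n (Vmap n m q k)).card ≤ r := by
    have hsub : im n (Vmap n m q k) ⊆ insert 1 (Finset.Icc m q) := by
      intro v hv
      rw [im, Finset.mem_image] at hv
      obtain ⟨x, hxm, rfl⟩ := hv
      rw [Finset.mem_Icc] at hxm
      rcases Vcases x hxm.1 hxm.2 with h | ⟨h, h', h''⟩ | ⟨h, h'⟩ <;> rw [h]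
      · exact Finset.mem_insert_self 1 _
      · exact Finset.mem_insert_of_mem (Finset.mem_Icc.2 ⟨h', h''⟩)
      · exact Finset.mem_insert_of_mem (Finset.mem_Icc.2 ⟨by omega, le_rfl⟩)
    have h1 : (im n (Vmap n m q k)).card ≤ (insert 1 (Finset.Icc m q)).card :=
      Finset.card_le_card hsub
    have h2 : (insert 1 (Finset.Icc m q)).card ≤ (Finset.Icc m q).card + 1 :=
      Finset.card_insert_le 1 _
    rw [Nat.card_Icc] at h2
    omega
  have hVmem : Vmap n m q k ∈ OPDr n r :=
    ⟨⟨VDn, (cyclic_iff_shapeC (by omega) VDn).2 VshC⟩, Vcard⟩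
  have hcomp : comp (Vmap n m q k) α = β := by
    funext x
    show α (Vmap n m q k x) = β x
    by_cases hx : 1 ≤ x ∧ x ≤ n
    · rcases lt_or_ge x m with h | h
      · rw [Vlow x hx.1 h, αlow 1 le_rfl (by omega), βlow x hx.1 h]
      · rcases le_or_gt x q with h' | h'
        · rw [Vmid x h h', αmid x h h', βmid x h h']
        · rcases le_or_gt x (q + k) with h'' | h''
          · rw [Vhi1 x h' h'', αmid q (by omega) le_rfl, βtail x h' hx.2, if_pos h'']
            omega
          · rw [Vhi2 x h'' hx.2, αlow 1 le_rfl (by omega), βtail x h' hx.2, if_neg (by omega)]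
    · rw [Vout x hx, hαDn.1.2 x hx, hβDn.1.2 x hx]
  exact hcomp ▸ gen.mul (gen.base (Or.inl hVmem)) (gen.base (Or.inr rfl))

end GenLemma

section Factor

variable {n m p q r' : ℕ}

lemma mem_Lset_of_half (C : Ctx n m p q r') {r : ℕ} {f : ℕ → ℕ} (hf : f ∈ ORDn n)
    (hcard : (im n f).card ≤ r) (hpr : p ≠ 0 → r ≤ m - p)
    (flow : ∀ x, 1 ≤ x → x < m → f x = 1)
    (fmid : ∀ x, m ≤ x → x ≤ q → f x = 2 * m - x)
    (ftail : ∀ x, q < x → x ≤ n → f x ≤ p + 2) :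
    f ∈ Lset n r' m := by
  have hm := C.hm; have hp := C.hp; have hq := C.hq; have hqn := C.hqn
  have hsubS : S0 p m ⊆ im n f := by
    intro v hv
    rw [mem_S0] at hv
    rw [im, Finset.mem_image]
    rcases hv with rfl | ⟨h1, h2⟩
    · exact ⟨1, Finset.mem_Icc.2 ⟨le_rfl, by omega⟩, flow 1 le_rfl (by omega)⟩
    · refine ⟨2 * m - v, Finset.mem_Icc.2 ⟨by omega, by omega⟩, ?_⟩
      rw [fmid _ (by omega) (by omega)]; omega
  have him : im n f = S0 p m := by
    rcases Nat.eq_zero_or_pos p with hp0 | hp0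
    · refine Finset.Subset.antisymm ?_ hsubS
      intro v hv
      rw [im, Finset.mem_image] at hv
      obtain ⟨x, hx, rfl⟩ := hv
      rw [Finset.mem_Icc] at hx
      rw [mem_S0]
      rcases lt_or_ge x m with h | h
      · rw [flow x hx.1 h]; exact Or.inl rfl
      · rcases le_or_gt x q with h' | h'
        · rw [fmid x h h']; right; constructor <;> omega
        · have h1 := ftail x h' hx.2
          have h2 := dn_lb hf.1 hx.1 hx.2
          rcases Nat.eq_or_lt_of_le h2 with h3 | h3
          · exact Or.inl h3.symm
          · right; constructor <;> omega
    · have hrle := hpr (by omega)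
      exact (Finset.eq_of_subset_of_card_le hsubS (by rw [card_S0 hp]; omega)).symm
  exact mem_Lset_of_pattern C hf him flow fmid

lemma factor (C : Ctx n m p q r') {r : ℕ} (hpr : p ≠ 0 → r ≤ m - p) {f g : ℕ → ℕ}
    (hf : f ∈ ORDr n r) (hg : g ∈ ORDr n r) (hfg : comp f g ∈ Lset n r' m) :
    f ∈ Lset n r' m ∨ g ∈ Lset n r' m := by
  have hm := C.hm; have hp := C.hp; have hq := C.hq; have hqn := C.hqn
  have hn1 : 1 ≤ n := by omega
  obtain ⟨hlow, hmid, -⟩ := classify C hfg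
  have hmid' : ∀ x, m ≤ x → x ≤ q → g (f x) = 2 * m - x := fun x h1 h2 => hmid x h1 h2
  have hfDn : f ∈ Dn n := hf.1.1
  have hgDn : g ∈ Dn n := hg.1.1
  have hnotC : ¬ ShapeC n (comp f g) := not_shapeC_mid C hmid
  have hfm : f m = m := by
    have h1 : g (f m) = m := by
      have := hmid' m le_rfl (by omega); omega
    have h2 : f m ≤ m := hfDn.2 m (by omega) (by omega)
    have h3 : g (f m) ≤ f m := hgDn.2 _ (dn_lb hfDn (by omega) (by omega))
      (dn_ub hfDn (by omega) (by omega))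
    omega
  rcases hf.1.2 with hfc | hfa <;> rcases hg.1.2 with hgc | hga
  · exact absurd (shapeC_comp_CC hn1 hfDn hgDn ((cyclic_iff_shapeC hn1 hfDn).1 hfc)
      ((cyclic_iff_shapeC hn1 hgDn).1 hgc)) hnotC
  · -- f cyclic, g anticyclic: g ∈ Lset
    right
    obtain ⟨d₁, hd₁1, hd₁n, fmono, ftail₁⟩ := (cyclic_iff_shapeC hn1 hfDn).1 hfc
    obtain ⟨a₂, ha₂1, ha₂n, gpre, ganti⟩ := (anticyclic_iff_shapeA hn1 hgDn).1 hga
    have hg1 : g 1 = 1 := dn_one hn1 hgDn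
    have hxd : ∀ x, m ≤ x → x ≤ q → x ≤ d₁ := by
      intro x h1 h2
      by_contra hcon
      push_neg at hcon
      have h3 : f x = 1 := ftail₁ x hcon (by omega)
      have h4 := hmid' x h1 h2
      rw [h3, hg1] at h4
      omega
    have hfix : ∀ i, m + i ≤ q → f (m + i) = m + i := by
      intro i
      induction i with
      | zero => intro _; simpa using hfm
      | succ i ih =>
        intro hle
        show f (m + i + 1) = m + i + 1
        have hi := ih (by omega)
        have h1 : g (f (m + i + 1)) = 2 * m - (m + i + 1) := hmid' (m + i + 1) (by omega) hle
        have hmono_le : f (m + i) ≤ f (m + i + 1) :=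
          fmono (m + i) (m + i + 1) (by omega) (by omega) (hxd (m + i + 1) (by omega) hle)
        have hub : f (m + i + 1) ≤ m + i + 1 := hfDn.2 _ (by omega) (by omega)
        have hglow : g (m + i) = 2 * m - (m + i) := by
          have := hmid' (m + i) (by omega) (by omega)
          rwa [hi] at this
        have hne : f (m + i + 1) ≠ m + i := by
          intro he
          rw [he, hglow] at h1
          omega
        omega
    have gmid : ∀ x, m ≤ x → x ≤ q → g x = 2 * m - x := by
      intro x h1 h2
      have h3 := hfix (x - m) (by omega)
      have hx : f x = x := by rwa [show m + (x - m) = x by omega] at h3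
      have h4 := hmid' x h1 h2
      rwa [hx] at h4
    have hgm : g m = m := by have := gmid m le_rfl (by omega); omega
    have ha₂lt : a₂ < m := by
      by_contra hcon
      push_neg at hcon
      have := gpre m (by omega) hcon
      omega
    have ha₂m : m - 1 ≤ a₂ := by
      by_contra hcon
      push_neg at hcon
      have h5 := ganti (m - 1) m (by omega) (by omega) (by omega)
      have h6 := hgDn.2 (m - 1) (by omega) (by omega)
      omega
    have glow : ∀ x, 1 ≤ x → x < m → g x = 1 := fun x h1 h2 => gpre x h1 (by omega)
    have gtail : ∀ x, q < x → x ≤ n → g x ≤ p + 2 := by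
      intro x h1 h2
      have h5 := ganti q x (by omega) (by omega) h2
      have h6 := gmid q (by omega) le_rfl
      omega
    exact mem_Lset_of_half C hg.1 hg.2 hpr glow gmid gtail
  · -- f anticyclic, g cyclic: f ∈ Lset
    left
    obtain ⟨a₁, ha₁1, ha₁n, fpre, fanti⟩ := (anticyclic_iff_shapeA hn1 hfDn).1 hfa
    have ha₁lt : a₁ < m := by
      by_contra hcon
      push_neg at hcon
      have := fpre m (by omega) hcon
      omega
    have ha₁m : m - 1 ≤ a₁ := by
      by_contra hcon
      push_neg at hcon
      have h5 := fanti (m - 1) m (by omega) (by omega) (by omega)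
      have h6 := hfDn.2 (m - 1) (by omega) (by omega)
      omega
    have flow : ∀ x, 1 ≤ x → x < m → f x = 1 := fun x h1 h2 => fpre x h1 (by omega)
    have hfix : ∀ i, m + i ≤ q → f (m + i) = m - i := by
      intro i
      induction i with
      | zero => intro _; simpa using hfm
      | succ i ih =>
        intro hle
        show f (m + i + 1) = m - (i + 1)
        have hi := ih (by omega)
        have h1 : g (f (m + i + 1)) = 2 * m - (m + i + 1) := hmid' (m + i + 1) (by omega) hle
        have hble : f (m + i + 1) ≤ f (m + i) :=
          fanti (m + i) (m + i + 1) (by omega) (by omega) (by omega)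
        have hblb : g (f (m + i + 1)) ≤ f (m + i + 1) := hgDn.2 _
          (dn_lb hfDn (by omega) (by omega)) (dn_ub hfDn (by omega) (by omega))
        have hglow : g (m - i) = 2 * m - (m + i) := by
          have := hmid' (m + i) (by omega) (by omega)
          rwa [hi] at this
        have hne : f (m + i + 1) ≠ m - i := by
          intro he
          rw [he, hglow] at h1
          omega
        omega
    have fmid : ∀ x, m ≤ x → x ≤ q → f x = 2 * m - x := by
      intro x h1 h2
      have h3 := hfix (x - m) (by omega)
      rw [show m + (x - m) = x by omega] at h3
      rw [h3]
      omega
    have ftail : ∀ x, q < x → x ≤ n → f x ≤ p + 2 := by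
      intro x h1 h2
      have h5 := fanti q x (by omega) (by omega) h2
      have h6 := fmid q (by omega) le_rfl
      omega
    exact mem_Lset_of_half C hf.1 hf.2 hpr flow fmid ftail
  · exact absurd (shapeC_comp_AA hn1 hfDn hgDn ((anticyclic_iff_shapeA hn1 hfDn).1 hfa)
      ((anticyclic_iff_shapeA hn1 hgDn).1 hga)) hnotC

end Factor

end Aux

theorem lset_generation_and_maximal (n r m : ℕ) (hn : 4 ≤ n) (hr : 3 ≤ r) (hrn : r ≤ n - 1)
    (hm3 : 3 ≤ m) (hm : m ≤ n - rhat n r + 1) :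
    (∀ α ∈ Lset n (rhat n r) m, ∀ β ∈ Lset n (rhat n r) m, gen (OPDr n r ∪ {α}) β) ∧
    IsMaximalSubsemigroupOf (ORDr n r \ Lset n (rhat n r) m) (ORDr n r) := by
  have hrdef : rhat n r = min r ((n + 2) / 2) := rfl
  set r' := rhat n r with hr'
  have hr'3 : 3 ≤ r' := by omega
  have hr'r : r' ≤ r := by omega
  have hr'n : r' ≤ (n + 2) / 2 := by omega
  set p := m - r' with hpdef
  set q := 2 * m - p - 2 with hqdef
  have C : Ctx n m p q r' := ⟨hm3, by omega, by omega, by omega, hpdef⟩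
  have hprm : p ≠ 0 → r ≤ m - p := by intro h; omega
  have hmp_le : m - p ≤ r := by omega
  have hn1 : 1 ≤ n := by omega
  constructor
  · intro α hα β hβ
    exact gen_lemma C hmp_le hα hβ
  · refine ⟨⟨Set.diff_subset, ?_⟩, ?_, ?_⟩
    · intro f hf g hg
      refine ⟨ordr_comp hn1 hf.1 hg.1, ?_⟩
      intro hc
      rcases factor C hprm hf.1 hg.1 hc with h | h
      · exact hf.2 h
      · exact hg.2 h
    · intro heq
      have h1 : lam n r' m ∈ ORDr n r :=
        ⟨lam_mem_ORDn C, by rw [im_lam C, card_S0 C.hp]; omega⟩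
      have h3 : lam n r' m ∈ ORDr n r \ Lset n r' m := by rw [heq]; exact h1
      exact h3.2 (lam_mem_Lset C)
    · intro U hU hSU
      by_cases hUS : U ⊆ ORDr n r \ Lset n r' m
      · exact Or.inl (Set.Subset.antisymm hUS hSU)
      · right
        rw [Set.not_subset] at hUS
        obtain ⟨α, hαU, hαS⟩ := hUS
        have hαT : α ∈ ORDr n r := hU.1 hαU
        have hαL : α ∈ Lset n r' m := by
          by_contra h
          exact hαS ⟨hαT, h⟩
        apply Set.Subset.antisymm hU.1
        intro h hh
        by_cases hhL : h ∈ Lset n r' m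
        · have hgen := gen_lemma C hmp_le hαL hhL
          have hcl : ∀ φ, gen (OPDr n r ∪ {α}) φ → φ ∈ U := by
            intro φ hφ
            induction hφ with
            | base hb =>
              rcases hb with hb | hb
              · apply hSU
                refine ⟨⟨⟨hb.1.1, Or.inl hb.1.2⟩, hb.2⟩, ?_⟩
                intro hbL
                exact lset_not_cyclic C hbL hb.1.2
              · exact hb ▸ hαU
            | mul hf hg ihf ihg => exact hU.2 _ ihf _ ihg
          exact hcl h hgen
        · exact hSU ⟨hh, hhL⟩

end ORDPaper
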